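/- Let Φ be a Leonard system and set m_i = tr(E_i E*_0) for 0 ≤ i ≤ d. Then: (i) E_i E*_0 E_i = m_i E_i; (ii) E*_0 E_i E*_0 = m_i E*_0; (iii) m_i ≠ 0 for all i; (iv) ∑_{i=0}^d m_i = 1; (v) tr(E_0 E*_0) = tr(E*_0 E_0) (so m_0 equals the dual quantity m*_0 = tr(E*_0 E_0)). -/

import Mathlib

/-!
The `d + 1` nonzero orthogonal idempotents `E_i` (and likewise `E*_i`) summing to `1` in
`Mat_{d+1}(K)` all have rank one, i.e. are of the form `p qᵀ` with `qᵀ p = 1`. For such an `E`,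
`E X E = tr (E X) E`; this gives (i), (ii) and, as `tr E*_0 = 1`, also (iv).

For (iii): if `Y A = θ Y` and `Y E*_0 = 0`, then inductively `Y E*_{j+1} A E*_j = Y A E*_j = 0`
(because `E*_r A E*_j = 0` for `r > j + 1`), and since `E*_{j+1} A E*_j ≠ 0` while `E*_{j+1}`
generates a minimal right ideal, `Y E*_{j+1} = 0`; hence `Y = 0`. Applied to `Y = E_i` and, in
the transposed system, to `Y = E_iᵀ`, this gives `E_i E*_0 ≠ 0 ≠ E*_0 E_i`. Then `tr (E_i E*_0) = 0`
would force `E_i E*_0 ∈ E_i E*_0 E_i 𝒜 = 0`.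
-/

open Matrix Polynomial

def IsTridiag {K : Type*} [Field K] {n : ℕ} (M : Matrix (Fin n) (Fin n) K) : Prop :=
  ∀ i j : Fin n, ((i : ℕ) + 1 < j ∨ (j : ℕ) + 1 < i) → M i j = 0

def IsIrredTridiag {K : Type*} [Field K] {n : ℕ} (M : Matrix (Fin n) (Fin n) K) : Prop :=
  IsTridiag M ∧ ∀ i j : Fin n, ((i : ℕ) + 1 = j ∨ (j : ℕ) + 1 = i) → M i j ≠ 0

/-- Entry of a matrix with natural-number indices; `0` when out of range. -/
def mentry {K : Type*} [Field K] {n : ℕ} (M : Matrix (Fin n) (Fin n) K) (i j : ℕ) : K :=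
  if h : i < n ∧ j < n then M ⟨i, h.1⟩ ⟨j, h.2⟩ else 0

/-- A family indexed by `Fin (d+1)` viewed as indexed by `ℕ`, with value `0` out of range. -/
def natIdx {d : ℕ} {M : Type*} [Zero M] (E : Fin (d+1) → M) (n : ℕ) : M :=
  if h : n < d + 1 then E ⟨n, h⟩ else 0

/-- A Leonard system of diameter `d` in the matrix algebra `Mat_{d+1}(K)`:
`A`, `As` are multiplicity-free with eigenvalues `θ i`, `θs i` and primitive
idempotents `E i`, `Es i`, satisfying the tridiagonal conditions. -/
structure LeonardSystem (K : Type*) [Field K] (d : ℕ) where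
  A : Matrix (Fin (d+1)) (Fin (d+1)) K
  As : Matrix (Fin (d+1)) (Fin (d+1)) K
  E : Fin (d+1) → Matrix (Fin (d+1)) (Fin (d+1)) K
  Es : Fin (d+1) → Matrix (Fin (d+1)) (Fin (d+1)) K
  θ : Fin (d+1) → K
  θs : Fin (d+1) → K
  θ_inj : Function.Injective θ
  θs_inj : Function.Injective θs
  E_ne : ∀ i, E i ≠ 0
  Es_ne : ∀ i, Es i ≠ 0
  E_mul : ∀ i j, E i * E j = if i = j then E i else 0
  Es_mul : ∀ i j, Es i * Es j = if i = j then Es i else 0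
  E_sum : ∑ i, E i = 1
  Es_sum : ∑ i, Es i = 1
  A_eq : A = ∑ i, θ i • E i
  As_eq : As = ∑ i, θs i • Es i
  EAsE_zero : ∀ i j : Fin (d+1), ((i:ℕ) + 1 < j ∨ (j:ℕ) + 1 < i) → E i * As * E j = 0
  EAsE_ne : ∀ i j : Fin (d+1), ((i:ℕ) + 1 = j ∨ (j:ℕ) + 1 = i) → E i * As * E j ≠ 0
  EsAEs_zero : ∀ i j : Fin (d+1), ((i:ℕ) + 1 < j ∨ (j:ℕ) + 1 < i) → Es i * A * Es j = 0
  EsAEs_ne : ∀ i j : Fin (d+1), ((i:ℕ) + 1 = j ∨ (j:ℕ) + 1 = i) → Es i * A * Es j ≠ 0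

/-- A Leonard pair in `Mat_{d+1}(K)`. -/
structure LeonardPair (K : Type*) [Field K] (d : ℕ) where
  A : Matrix (Fin (d+1)) (Fin (d+1)) K
  As : Matrix (Fin (d+1)) (Fin (d+1)) K
  cond1 : ∃ P : Matrix (Fin (d+1)) (Fin (d+1)) K, IsUnit P ∧
    IsIrredTridiag (P⁻¹ * A * P) ∧ (P⁻¹ * As * P).IsDiag
  cond2 : ∃ P : Matrix (Fin (d+1)) (Fin (d+1)) K, IsUnit P ∧
    (P⁻¹ * A * P).IsDiag ∧ IsIrredTridiag (P⁻¹ * As * P)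


section RankOne

variable {K : Type*} [Field K] {ι : Type*} [Fintype ι]

theorem vecMulVec_mul_mul_vecMulVec (p q : ι → K) (X : Matrix ι ι K) :
    vecMulVec p q * X * vecMulVec p q = trace (vecMulVec p q * X) • vecMulVec p q := by
  rw [vecMulVec_mul, vecMulVec_mul_vecMulVec, vecMulVec_smul, trace_vecMulVec,
    dotProduct_comm p]

theorem dotProduct_eq_one_of_isIdempotentElem_vecMulVec {p q : ι → K}
    (h : IsIdempotentElem (vecMulVec p q)) (hne : vecMulVec p q ≠ 0) : q ⬝ᵥ p = 1 := by
  have : (q ⬝ᵥ p - 1) • vecMulVec p q = 0 := by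
    rw [sub_smul, one_smul, ← vecMulVec_smul, ← vecMulVec_mul_vecMulVec, h.eq, sub_self]
  exact sub_eq_zero.1 ((smul_eq_zero.1 this).resolve_right hne)

theorem exists_vecMulVec_mul_mul_eq [DecidableEq ι] {p q : ι → K} {M : Matrix ι ι K}
    (h : vecMulVec p q * M ≠ 0) : ∃ X, vecMulVec p q * M * X = vecMulVec p q := by
  rw [vecMulVec_mul] at h ⊢
  obtain ⟨j, hj⟩ := Function.ne_iff.1 (not_or.1 (vecMulVec_eq_zero.not.1 h)).2
  refine ⟨vecMulVec (Pi.single j ((q ᵥ* M) j)⁻¹) q, ?_⟩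
  rw [vecMulVec_mul_vecMulVec, dotProduct_single, mul_inv_cancel₀ hj, one_smul]

theorem exists_eq_vecMulVec_of_mulVec_mem_span [DecidableEq ι] {M : Matrix ι ι K} {p : ι → K}
    (h : ∀ x, M *ᵥ x ∈ K ∙ p) : ∃ q, M = vecMulVec p q := by
  choose q hq using fun j => Submodule.mem_span_singleton.1 (h (Pi.single j 1))
  refine ⟨q, Matrix.ext fun i j => ?_⟩
  rw [vecMulVec_apply, mul_comm, ← smul_eq_mul, ← Pi.smul_apply, hq, mulVec_single_one, col_apply]

theorem CompleteOrthogonalIdempotents.exists_eq_vecMulVec [DecidableEq ι] {κ : Type*} [Fintype κ]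
    {F : κ → Matrix ι ι K} (hF : CompleteOrthogonalIdempotents F) (hne : ∀ k, F k ≠ 0)
    (hcard : Fintype.card ι ≤ Fintype.card κ) (k : κ) :
    ∃ p q : ι → K, F k = vecMulVec p q ∧ q ⬝ᵥ p = 1 := by
  classical
  have hfix : ∀ k, ∃ v, v ≠ 0 ∧ F k *ᵥ v = v := fun k => by
    obtain ⟨j, hj⟩ : ∃ j, F k *ᵥ Pi.single j 1 ≠ 0 := by
      by_contra! h
      exact hne k (ext_of_mulVec_single fun j => by rw [h, zero_mulVec])
    exact ⟨_, hj, by rw [mulVec_mulVec, (hF.idem k).eq]⟩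
  choose v hv0 hv using hfix
  have hFv : ∀ j l, F j *ᵥ v l = if j = l then v l else 0 := fun j l => by
    split_ifs with h
    · rw [h, hv]
    · rw [← hv l, mulVec_mulVec, hF.ortho h, zero_mulVec]
  have hli : LinearIndependent K v := Fintype.linearIndependent_iff.2 fun g hg j => by
    have := congrArg (F j *ᵥ ·) hg
    simp only [mulVec_sum, mulVec_smul, hFv, smul_ite, smul_zero, Finset.sum_ite_eq,
      Finset.mem_univ, if_true, mulVec_zero] at this
    exact (smul_eq_zero.1 this).resolve_right (hv0 j)
  have hspan : Submodule.span K (Set.range v) = ⊤ :=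
    hli.span_eq_top_of_card_eq_finrank' <| by
      rw [Module.finrank_fintype_fun_eq_card]
      exact le_antisymm (by simpa using hli.fintype_card_le_finrank) hcard
  have hrange : ∀ x, F k *ᵥ x ∈ K ∙ v k := fun x => by
    obtain ⟨c, hc⟩ := (Submodule.mem_span_range_iff_exists_fun K).1
      (hspan ▸ Submodule.mem_top : F k *ᵥ x ∈ Submodule.span K (Set.range v))
    refine Submodule.mem_span_singleton.2 ⟨c k, ?_⟩
    rw [← (hF.idem k).eq, ← mulVec_mulVec, ← hc]
    simp only [mulVec_sum, mulVec_smul, hFv, smul_ite, smul_zero, Finset.sum_ite_eq,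
      Finset.mem_univ, if_true]
  obtain ⟨q, hq⟩ := exists_eq_vecMulVec_of_mulVec_mem_span hrange
  exact ⟨v k, q, hq,
    dotProduct_eq_one_of_isIdempotentElem_vecMulVec (hq ▸ hF.idem k) (hq ▸ hne k)⟩

end RankOne

theorem eq_zero_of_mul_eq_zero_of_hessenberg {K R : Type*} [CommSemiring K] [Ring R] [Algebra K R]
    {d : ℕ} {e : Fin (d + 1) → R} {A Y : R} {θ : K} (he : ∑ j, e j = 1)
    (hmin : ∀ j M, e j * M ≠ 0 → ∃ X, e j * M * X = e j)
    (hfar : ∀ r j : Fin (d + 1), (j : ℕ) + 1 < r → e r * A * e j = 0)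
    (hnext : ∀ r j : Fin (d + 1), (j : ℕ) + 1 = r → e r * A * e j ≠ 0)
    (hY : Y * A = θ • Y) (h0 : Y * e 0 = 0) : Y = 0 := by
  have hle : ∀ k : ℕ, ∀ r : Fin (d + 1), (r : ℕ) ≤ k → Y * e r = 0 := by
    intro k
    induction k with
    | zero =>
      intro r hr
      obtain rfl : r = 0 := Fin.ext (Nat.le_zero.1 hr)
      exact h0
    | succ k ih =>
      intro r hr
      rcases Nat.lt_or_eq_of_le hr with hr | hr
      · exact ih r (Nat.le_of_lt_succ hr)
      let j : Fin (d + 1) := ⟨k, by omega⟩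
      have hblock : Y * e r * (A * e j) = 0 := by
        have hsplit : Y * (A * e j) = ∑ s, Y * e s * (A * e j) := by
          rw [← Finset.sum_mul, ← Finset.mul_sum, he, mul_one]
        rw [← mul_assoc, hY, smul_mul_assoc, ih j le_rfl, smul_zero,
          Finset.sum_eq_single r] at hsplit
        · exact hsplit.symm
        · intro s _ hs
          rcases Nat.lt_or_ge k s with hks | hks
          · have : (s : ℕ) ≠ r := Fin.val_ne_of_ne hs
            rw [mul_assoc Y, ← mul_assoc (e s), hfar s j (by simp only [j]; omega), mul_zero]
          · rw [ih s hks, zero_mul]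
        · simp
      obtain ⟨X, hX⟩ := hmin r (A * e j) (by rw [← mul_assoc]; exact hnext r j hr.symm)
      rw [← hX, ← mul_assoc, ← mul_assoc, hblock, zero_mul]
  rw [← mul_one Y, ← he, Finset.mul_sum]
  exact Finset.sum_eq_zero fun r _ => hle d r (Nat.le_of_lt_succ r.isLt)

namespace LeonardSystem

variable {K : Type*} [Field K] {d : ℕ} (L : LeonardSystem K d)

theorem completeOrthogonalIdempotents_E : CompleteOrthogonalIdempotents L.E :=
  ⟨OrthogonalIdempotents.iff_mul_eq.2 L.E_mul, L.E_sum⟩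

theorem completeOrthogonalIdempotents_Es : CompleteOrthogonalIdempotents L.Es :=
  ⟨OrthogonalIdempotents.iff_mul_eq.2 L.Es_mul, L.Es_sum⟩

theorem exists_E_eq_vecMulVec (i : Fin (d + 1)) :
    ∃ p q, L.E i = vecMulVec p q ∧ q ⬝ᵥ p = 1 :=
  L.completeOrthogonalIdempotents_E.exists_eq_vecMulVec L.E_ne le_rfl i

theorem exists_Es_eq_vecMulVec (i : Fin (d + 1)) :
    ∃ p q, L.Es i = vecMulVec p q ∧ q ⬝ᵥ p = 1 :=
  L.completeOrthogonalIdempotents_Es.exists_eq_vecMulVec L.Es_ne le_rfl i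

theorem E_mul_A (i : Fin (d + 1)) : L.E i * L.A = L.θ i • L.E i := by
  simp [L.A_eq, Finset.mul_sum, L.E_mul]

theorem A_mul_E (i : Fin (d + 1)) : L.A * L.E i = L.θ i • L.E i := by
  simp [L.A_eq, Finset.sum_mul, L.E_mul]

theorem E_mul_mul_E (i : Fin (d + 1)) (X : Matrix (Fin (d + 1)) (Fin (d + 1)) K) :
    L.E i * X * L.E i = trace (L.E i * X) • L.E i := by
  obtain ⟨p, q, hpq, -⟩ := L.exists_E_eq_vecMulVec i
  rw [hpq, vecMulVec_mul_mul_vecMulVec]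

theorem Es_mul_mul_Es (j : Fin (d + 1)) (X : Matrix (Fin (d + 1)) (Fin (d + 1)) K) :
    L.Es j * X * L.Es j = trace (L.Es j * X) • L.Es j := by
  obtain ⟨p, q, hpq, -⟩ := L.exists_Es_eq_vecMulVec j
  rw [hpq, vecMulVec_mul_mul_vecMulVec]

theorem trace_Es (j : Fin (d + 1)) : trace (L.Es j) = 1 := by
  obtain ⟨p, q, hpq, hqp⟩ := L.exists_Es_eq_vecMulVec j
  rw [hpq, trace_vecMulVec, dotProduct_comm, hqp]

theorem exists_Es_mul_mul_eq (j : Fin (d + 1)) {M : Matrix (Fin (d + 1)) (Fin (d + 1)) K}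
    (h : L.Es j * M ≠ 0) : ∃ X, L.Es j * M * X = L.Es j := by
  obtain ⟨p, q, hpq, -⟩ := L.exists_Es_eq_vecMulVec j
  rw [hpq] at h ⊢
  exact exists_vecMulVec_mul_mul_eq h

theorem E_mul_Es_zero_ne_zero (i : Fin (d + 1)) : L.E i * L.Es 0 ≠ 0 := fun h =>
  L.E_ne i <| eq_zero_of_mul_eq_zero_of_hessenberg L.Es_sum (fun j _ => L.exists_Es_mul_mul_eq j)
    (fun r j h => L.EsAEs_zero r j (.inr h)) (fun r j h => L.EsAEs_ne r j (.inr h))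
    (L.E_mul_A i) h

theorem Es_zero_mul_E_ne_zero (i : Fin (d + 1)) : L.Es 0 * L.E i ≠ 0 := by
  intro h
  refine L.E_ne i <| transpose_eq_zero.1 <|
    eq_zero_of_mul_eq_zero_of_hessenberg (e := fun j => (L.Es j)ᵀ) (A := L.Aᵀ) ?_ ?_ ?_ ?_
      (by rw [← transpose_mul, L.A_mul_E, transpose_smul]) (by rw [← transpose_mul, h, transpose_zero])
  · rw [← transpose_sum, L.Es_sum, transpose_one]
  · intro j M hM
    obtain ⟨p, q, hpq, -⟩ := L.exists_Es_eq_vecMulVec j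
    rw [hpq, transpose_vecMulVec] at hM ⊢
    exact exists_vecMulVec_mul_mul_eq hM
  · intro r j hrj
    rw [← transpose_mul, ← transpose_mul, ← mul_assoc, L.EsAEs_zero j r (.inl hrj), transpose_zero]
  · intro r j hrj
    rw [← transpose_mul, ← transpose_mul, ← mul_assoc, Ne, transpose_eq_zero]
    exact L.EsAEs_ne j r (.inl hrj)

theorem trace_E_mul_Es_zero_ne_zero (i : Fin (d + 1)) : trace (L.E i * L.Es 0) ≠ 0 := by
  intro hi
  obtain ⟨X, hX⟩ := L.exists_Es_mul_mul_eq 0 (L.Es_zero_mul_E_ne_zero i)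
  apply L.E_mul_Es_zero_ne_zero i
  have hidem : L.Es 0 * L.Es 0 = L.Es 0 := (L.completeOrthogonalIdempotents_Es.idem 0).eq
  calc L.E i * L.Es 0 = L.E i * (L.Es 0 * L.Es 0 * L.E i * X) := by rw [hidem, hX]
    _ = L.E i * L.Es 0 * L.E i * X := by rw [hidem]; simp only [mul_assoc]
    _ = 0 := by rw [L.E_mul_mul_E, hi, zero_smul, zero_mul]

end LeonardSystem

theorem stmt13 {K : Type*} [Field K] {d : ℕ} (L : LeonardSystem K d)
    (m : Fin (d+1) → K) (hm : ∀ i, m i = Matrix.trace (L.E i * L.Es 0)) :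
    (∀ i, L.E i * L.Es 0 * L.E i = m i • L.E i) ∧
    (∀ i, L.Es 0 * L.E i * L.Es 0 = m i • L.Es 0) ∧
    (∀ i, m i ≠ 0) ∧
    (∑ i, m i = 1) ∧
    Matrix.trace (L.E 0 * L.Es 0) = Matrix.trace (L.Es 0 * L.E 0) := by
  refine ⟨fun i => by rw [hm, L.E_mul_mul_E], fun i => by rw [hm, trace_mul_comm, L.Es_mul_mul_Es],
    fun i => hm i ▸ L.trace_E_mul_Es_zero_ne_zero i, ?_, trace_mul_comm _ _⟩
  rw [Finset.sum_congr rfl fun i _ => hm i, ← trace_sum, ← Finset.sum_mul, L.E_sum, one_mul,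
    L.trace_Es]
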